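/- arXiv:2405.16535 — 3 statements merged into one kernel-verified Lean document; each statement's English description precedes it below -/
import Mathlib

section
/- Let μ > 0, κ ≥ 0, σ > 0, n ≥ 1 an integer, f ∈ L²(0,T), and let a be a solution of a''(t) = −(μn²π²+κ)a'(t) − (σn²π²+1)n²π² a(t) + √2 f(t)((−1)ⁿ−1). Then for all t ∈ [0,T]: (a'(t) + (μn²π²+κ)a(t))² + (σn²π²+1)n²π² a(t)² + ∫₀ᵗ (μn²π²+κ)(σn²π²+1)n²π² a(s)² ds ≤ (a'(0) + (μn²π²+κ)a(0))² + (σn²π²+1)n²π² a(0)² + ∫₀ᵗ (μn²π²+κ) a'(s)² ds + (8((μ+κ)² + σ)/(σ(μn²π²+κ))) ∫₀ᵗ f(s)² ds. -/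
open MeasureTheory Set

/-! Write `L = μn²π² + κ`, `R = (σn²π² + 1)n²π²` and `g` for the forcing. The shifted velocity
`c = a' + L a` satisfies `c' = -R a + g`, hence `(c² + R a²)' = 2 c g - 2 L R a²`; as `a'` is only
absolutely continuous, `c²` is integrated with the fundamental theorem of calculus for absolutely
continuous functions. Young's inequality `2 c g ≤ L a'² + L R a² + (1/L + L/R) g²` then leaves half
of the dissipation on the left, and `(1/L + L/R) · 2((-1)ⁿ - 1)² ≤ 8((μ+κ)² + σ)/(σL)` because
`n²π² ≥ 1` gives `σ L² ≤ (μ+κ)² R`. -/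

theorem sq_sub_sq_eq_integral_of_eq_add_primitive {F w : ℝ → ℝ} {a b : ℝ}
    (hw : IntervalIntegrable w volume a b)
    (hF : ∀ x ∈ uIcc a b, F x = F a + ∫ y in a..x, w y) :
    F b ^ 2 - F a ^ 2 = ∫ x in a..b, 2 * F x * w x := by
  set G := fun x => F a + ∫ y in a..x, w y with hGdef
  have hG : AbsolutelyContinuousOnInterval G a b :=
    (LipschitzWith.const (F a)).lipschitzOnWith.absolutelyContinuousOnInterval.fun_add
      (hw.absolutelyContinuousOnInterval_intervalIntegral left_mem_uIcc)
  have hG' : ∀ᵐ x, x ∈ uIoc a b → deriv G x = w x := by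
    filter_upwards [hw.ae_hasDerivAt_integral] with x hx hxI
    exact ((hx (uIoc_subset_uIcc hxI) a left_mem_uIcc).const_add (F a)).deriv
  calc F b ^ 2 - F a ^ 2 = G b * G b - G a * G a := by
        simp only [hGdef, intervalIntegral.integral_same, add_zero, ← hF b right_mem_uIcc]; ring
    _ = ∫ x in a..b, deriv G x * G x + G x * deriv G x := (hG.integral_deriv_mul_eq_sub hG).symm
    _ = ∫ x in a..b, 2 * F x * w x := by
        refine intervalIntegral.integral_congr_ae ?_
        filter_upwards [hG'] with x hx hxI
        rw [hx hxI, hF x (uIoc_subset_uIcc hxI)]; ring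

theorem continuousOn_of_eq_add_primitive {F w : ℝ → ℝ} {a b : ℝ}
    (hw : IntervalIntegrable w volume a b)
    (hF : ∀ x ∈ uIcc a b, F x = F a + ∫ y in a..x, w y) : ContinuousOn F (uIcc a b) :=
  (continuousOn_const.add
    (intervalIntegral.continuousOn_primitive_interval' hw left_mem_uIcc)).congr hF

theorem two_mul_add_mul_mul_le {L R : ℝ} (hL : 0 < L) (hR : 0 < R) (x y z : ℝ) :
    2 * (y + L * x) * z ≤ L * y ^ 2 + L * R * x ^ 2 + (1 / L + L / R) * z ^ 2 := by
  have hsos : L * y ^ 2 + L * R * x ^ 2 + (1 / L + L / R) * z ^ 2 - 2 * (y + L * x) * z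
      = (L * y - z) ^ 2 / L + L / R * (R * x - z) ^ 2 := by
    field_simp; ring
  have : 0 ≤ (L * y - z) ^ 2 / L + L / R * (R * x - z) ^ 2 := by positivity
  linarith

namespace DampedOscillator

variable {L R t : ℝ} {a b g : ℝ → ℝ}

theorem shifted_energy_eq (ht : 0 ≤ t) (ha : ∀ s ∈ Icc 0 t, HasDerivAt a (b s) s)
    (hrhs : IntervalIntegrable (fun s => -L * b s - R * a s + g s) volume 0 t)
    (hb : ∀ s ∈ Icc 0 t, b s = b 0 + ∫ u in 0..s, (-L * b u - R * a u + g u)) :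
    (b t + L * a t) ^ 2 + R * a t ^ 2
      = (b 0 + L * a 0) ^ 2 + R * a 0 ^ 2
        + ∫ s in 0..t, (2 * (b s + L * a s) * g s - 2 * L * R * a s ^ 2) := by
  rw [← uIcc_of_le ht] at ha hb
  have haC : ContinuousOn a (uIcc 0 t) := fun s hs => (ha s hs).continuousAt.continuousWithinAt
  have hbC : ContinuousOn b (uIcc 0 t) := continuousOn_of_eq_add_primitive hrhs hb
  have hw : IntervalIntegrable (fun s => -R * a s + g s) volume 0 t := by
    convert hrhs.add (hbC.intervalIntegrable.const_mul L) using 1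
    funext s; ring
  have hc : ∀ s ∈ uIcc 0 t, b s + L * a s = (b 0 + L * a 0) + ∫ u in 0..s, (-R * a u + g u) := by
    intro s hs
    have hsub : uIcc 0 s ⊆ uIcc 0 t := uIcc_subset_uIcc_left hs
    have hbs : IntervalIntegrable b volume 0 s := (hbC.mono hsub).intervalIntegrable
    have has : a s = a 0 + ∫ u in 0..s, b u := by
      linarith [intervalIntegral.integral_eq_sub_of_hasDerivAt (fun u hu => ha u (hsub hu)) hbs]
    calc b s + L * a s
        = b 0 + L * a 0 + ((∫ u in 0..s, (-L * b u - R * a u + g u)) + ∫ u in 0..s, L * b u) := by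
          rw [hb s hs, has, intervalIntegral.integral_const_mul]; ring
      _ = b 0 + L * a 0 + ∫ u in 0..s, (-R * a u + g u) := by
          rw [← intervalIntegral.integral_add (hrhs.mono_set hsub) (hbs.const_mul L)]
          congr 1
          exact intervalIntegral.integral_congr fun u _ => by ring
  have hshift := sq_sub_sq_eq_integral_of_eq_add_primitive (F := fun s => b s + L * a s) hw hc
  have hsq : a t ^ 2 - a 0 ^ 2 = ∫ s in 0..t, 2 * a s * b s := by
    refine (intervalIntegral.integral_eq_sub_of_hasDerivAt (f := fun x => a x ^ 2)
      (fun s hs => ?_) ((continuousOn_const.mul haC).mul hbC).intervalIntegrable).symm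
    simpa [mul_assoc] using (ha s hs).fun_pow 2
  have hsum : (∫ s in 0..t, 2 * (b s + L * a s) * (-R * a s + g s))
        + R * ∫ s in 0..t, 2 * a s * b s
      = ∫ s in 0..t, (2 * (b s + L * a s) * g s - 2 * L * R * a s ^ 2) := by
    rw [← intervalIntegral.integral_const_mul, ← intervalIntegral.integral_add]
    · exact intervalIntegral.integral_congr fun s _ => by ring
    · exact hw.continuousOn_mul (continuousOn_const.mul (hbC.add (continuousOn_const.mul haC)))
    · exact (((continuousOn_const.mul haC).mul hbC).intervalIntegrable).const_mul R
  linear_combination hshift + R * hsq + hsum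

theorem shifted_energy_le (hL : 0 < L) (hR : 0 < R) (ht : 0 ≤ t)
    (ha : ∀ s ∈ Icc 0 t, HasDerivAt a (b s) s)
    (hrhs : IntervalIntegrable (fun s => -L * b s - R * a s + g s) volume 0 t)
    (hb : ∀ s ∈ Icc 0 t, b s = b 0 + ∫ u in 0..s, (-L * b u - R * a u + g u))
    (hg2 : IntervalIntegrable (fun s => g s ^ 2) volume 0 t) :
    (b t + L * a t) ^ 2 + R * a t ^ 2 + ∫ s in 0..t, L * R * a s ^ 2
      ≤ (b 0 + L * a 0) ^ 2 + R * a 0 ^ 2 + (∫ s in 0..t, L * b s ^ 2)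
        + (1 / L + L / R) * ∫ s in 0..t, g s ^ 2 := by
  rw [shifted_energy_eq ht ha hrhs hb]
  rw [← uIcc_of_le ht] at ha hb
  have haC : ContinuousOn a (uIcc 0 t) := fun s hs => (ha s hs).continuousAt.continuousWithinAt
  have hbC : ContinuousOn b (uIcc 0 t) := continuousOn_of_eq_add_primitive hrhs hb
  have ha2 : IntervalIntegrable (fun s => a s ^ 2) volume 0 t := (haC.pow 2).intervalIntegrable
  have hb2 : IntervalIntegrable (fun s => b s ^ 2) volume 0 t := (hbC.pow 2).intervalIntegrable
  have hg : IntervalIntegrable g volume 0 t := by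
    convert (hrhs.add (hbC.intervalIntegrable.const_mul L)).add
      (haC.intervalIntegrable.const_mul R) using 1
    funext s; ring
  have hmono : (∫ s in 0..t, (2 * (b s + L * a s) * g s - 2 * L * R * a s ^ 2))
      ≤ ∫ s in 0..t, (L * b s ^ 2 - L * R * a s ^ 2 + (1 / L + L / R) * g s ^ 2) := by
    refine intervalIntegral.integral_mono_on ht ?_ ?_ fun s _ => ?_
    · exact (hg.continuousOn_mul
        (continuousOn_const.mul (hbC.add (continuousOn_const.mul haC)))).sub (ha2.const_mul _)
    · exact ((hb2.const_mul L).sub (ha2.const_mul _)).add (hg2.const_mul _)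
    · linarith [two_mul_add_mul_mul_le hL hR (a s) (b s) (g s)]
  rw [intervalIntegral.integral_add ((hb2.const_mul L).sub (ha2.const_mul _)) (hg2.const_mul _),
    intervalIntegral.integral_sub (hb2.const_mul L) (ha2.const_mul _),
    intervalIntegral.integral_const_mul (1 / L + L / R)] at hmono
  linarith

end DampedOscillator

theorem forcing_coeff_le {μ κ σ N d : ℝ} (hμ : 0 < μ) (hκ : 0 ≤ κ) (hσ : 0 < σ) (hN : 1 ≤ N)
    (hd : d ^ 2 ≤ 4) :
    (1 / (μ * N + κ) + (μ * N + κ) / ((σ * N + 1) * N)) * (2 * d ^ 2)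
      ≤ 8 * ((μ + κ) ^ 2 + σ) / (σ * (μ * N + κ)) := by
  have hN0 : 0 < N := by linarith
  have hL : 0 < μ * N + κ := by positivity
  have hR : 0 < (σ * N + 1) * N := by positivity
  have hLN : μ * N + κ ≤ (μ + κ) * N := by nlinarith
  have hRN : σ * N ^ 2 ≤ (σ * N + 1) * N := by nlinarith
  have hfrac : (μ * N + κ) / ((σ * N + 1) * N) ≤ (μ + κ) ^ 2 / (σ * (μ * N + κ)) := by
    rw [div_le_div_iff₀ hR (by positivity)]
    calc (μ * N + κ) * (σ * (μ * N + κ)) = σ * (μ * N + κ) ^ 2 := by ring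
      _ ≤ σ * ((μ + κ) * N) ^ 2 := by gcongr
      _ ≤ (μ + κ) ^ 2 * ((σ * N + 1) * N) := by nlinarith [sq_nonneg (μ + κ)]
  calc (1 / (μ * N + κ) + (μ * N + κ) / ((σ * N + 1) * N)) * (2 * d ^ 2)
      ≤ (1 / (μ * N + κ) + (μ * N + κ) / ((σ * N + 1) * N)) * 8 := by gcongr; linarith
    _ ≤ (1 / (μ * N + κ) + (μ + κ) ^ 2 / (σ * (μ * N + κ))) * 8 := by gcongr
    _ = 8 * ((μ + κ) ^ 2 + σ) / (σ * (μ * N + κ)) := by field_simp; ring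

theorem neg_one_pow_sub_one_sq_le_four (n : ℕ) : ((-1 : ℝ) ^ n - 1) ^ 2 ≤ 4 := by
  rcases n.even_or_odd with hn | hn
  · rw [hn.neg_one_pow]; norm_num
  · rw [hn.neg_one_pow]; norm_num

theorem modal_shifted_energy_estimate_general (μ κ σ T : ℝ) (n : ℕ) (f a b : ℝ → ℝ)
    (hμ : 0 < μ) (hκ : 0 ≤ κ) (hσ : 0 < σ) (hn : 1 ≤ n)
    (hf2 : IntervalIntegrable (fun s => (f s) ^ 2) volume 0 T)
    (ha : ∀ t ∈ Icc (0:ℝ) T, HasDerivAt a (b t) t)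
    (hrhs : IntervalIntegrable (fun s =>
      -(μ * (n:ℝ)^2 * Real.pi^2 + κ) * b s
        - (σ * (n:ℝ)^2 * Real.pi^2 + 1) * (n:ℝ)^2 * Real.pi^2 * a s
        + Real.sqrt 2 * f s * ((-1:ℝ)^n - 1)) volume 0 T)
    (hb : ∀ t ∈ Icc (0:ℝ) T, b t = b 0 + ∫ s in (0:ℝ)..t,
      (-(μ * (n:ℝ)^2 * Real.pi^2 + κ) * b s
        - (σ * (n:ℝ)^2 * Real.pi^2 + 1) * (n:ℝ)^2 * Real.pi^2 * a s
        + Real.sqrt 2 * f s * ((-1:ℝ)^n - 1))) :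
    ∀ t ∈ Icc (0:ℝ) T,
      (b t + (μ * (n:ℝ)^2 * Real.pi^2 + κ) * a t) ^ 2
          + (σ * (n:ℝ)^2 * Real.pi^2 + 1) * (n:ℝ)^2 * Real.pi^2 * (a t) ^ 2
          + ∫ s in (0:ℝ)..t, (μ * (n:ℝ)^2 * Real.pi^2 + κ)
              * (σ * (n:ℝ)^2 * Real.pi^2 + 1) * (n:ℝ)^2 * Real.pi^2 * (a s) ^ 2
        ≤ (b 0 + (μ * (n:ℝ)^2 * Real.pi^2 + κ) * a 0) ^ 2
          + (σ * (n:ℝ)^2 * Real.pi^2 + 1) * (n:ℝ)^2 * Real.pi^2 * (a 0) ^ 2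
          + (∫ s in (0:ℝ)..t, (μ * (n:ℝ)^2 * Real.pi^2 + κ) * (b s) ^ 2)
          + (8 * ((μ + κ) ^ 2 + σ) / (σ * (μ * (n:ℝ)^2 * Real.pi^2 + κ)))
              * ∫ s in (0:ℝ)..t, (f s) ^ 2 := by
  rintro t ⟨ht0, htT⟩
  have hN : 1 ≤ (n : ℝ) ^ 2 * Real.pi ^ 2 :=
    one_le_mul_of_one_le_of_one_le (one_le_pow₀ (by exact_mod_cast hn))
      (one_le_pow₀ (by linarith [Real.pi_gt_three]))
  have hN0 : 0 < (n : ℝ) ^ 2 * Real.pi ^ 2 := one_pos.trans_le hN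
  have hL : 0 < μ * (n : ℝ) ^ 2 * Real.pi ^ 2 + κ := by rw [mul_assoc]; positivity
  have hR : 0 < (σ * (n : ℝ) ^ 2 * Real.pi ^ 2 + 1) * (n : ℝ) ^ 2 * Real.pi ^ 2 := by
    rw [mul_assoc _ ((n : ℝ) ^ 2) (Real.pi ^ 2)]; positivity
  have hcoef := forcing_coeff_le hμ hκ hσ hN (neg_one_pow_sub_one_sq_le_four n)
  -- the statement writes the modal coefficients as left-associated products `μ * n ^ 2 * π ^ 2`
  simp only [← mul_assoc] at hcoef
  have hsub : uIcc 0 t ⊆ uIcc 0 T := by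
    rw [uIcc_of_le ht0, uIcc_of_le (ht0.trans htT)]; exact Icc_subset_Icc_right htT
  have hforcing_sq : (fun s => (Real.sqrt 2 * f s * ((-1 : ℝ) ^ n - 1)) ^ 2)
      = fun s => 2 * ((-1 : ℝ) ^ n - 1) ^ 2 * f s ^ 2 := by
    funext s; rw [mul_pow, mul_pow, Real.sq_sqrt zero_le_two]; ring
  have key := DampedOscillator.shifted_energy_le
    (g := fun s => Real.sqrt 2 * f s * ((-1 : ℝ) ^ n - 1)) hL hR ht0
    (fun s hs => ha s ⟨hs.1, hs.2.trans htT⟩) (hrhs.mono_set hsub)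
    (fun s hs => hb s ⟨hs.1, hs.2.trans htT⟩)
    (hforcing_sq ▸ (hf2.mono_set hsub).const_mul (2 * ((-1 : ℝ) ^ n - 1) ^ 2))
  rw [hforcing_sq, intervalIntegral.integral_const_mul (2 * ((-1 : ℝ) ^ n - 1) ^ 2)] at key
  simp only [← mul_assoc] at key
  have := mul_le_mul_of_nonneg_right hcoef
    (intervalIntegral.integral_nonneg (μ := volume) ht0 fun s _ => sq_nonneg (f s))
  linarith

/-- Second energy estimate for the forced damped modal oscillator,
in the shifted variable a' + (μn²π²+κ)a. -/
theorem modal_shifted_energy_estimate (μ κ σ T : ℝ) (n : ℕ) (f a b : ℝ → ℝ)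
    (hμ : 0 < μ) (hκ : 0 ≤ κ) (hσ : 0 < σ) (hT : 0 < T) (hn : 1 ≤ n)
    (hf : MemLp f 2 (volume.restrict (Ioo (0:ℝ) T)))
    (hf2 : IntervalIntegrable (fun s => (f s) ^ 2) volume 0 T)
    (ha : ∀ t ∈ Icc (0:ℝ) T, HasDerivAt a (b t) t)
    (hrhs : IntervalIntegrable (fun s =>
      -(μ * (n:ℝ)^2 * Real.pi^2 + κ) * b s
        - (σ * (n:ℝ)^2 * Real.pi^2 + 1) * (n:ℝ)^2 * Real.pi^2 * a s
        + Real.sqrt 2 * f s * ((-1:ℝ)^n - 1)) volume 0 T)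
    (hb : ∀ t ∈ Icc (0:ℝ) T, b t = b 0 + ∫ s in (0:ℝ)..t,
      (-(μ * (n:ℝ)^2 * Real.pi^2 + κ) * b s
        - (σ * (n:ℝ)^2 * Real.pi^2 + 1) * (n:ℝ)^2 * Real.pi^2 * a s
        + Real.sqrt 2 * f s * ((-1:ℝ)^n - 1)))
    (hb2 : IntervalIntegrable (fun s => (b s) ^ 2) volume 0 T)
    (ha2 : IntervalIntegrable (fun s => (a s) ^ 2) volume 0 T) :
    ∀ t ∈ Icc (0:ℝ) T,
      (b t + (μ * (n:ℝ)^2 * Real.pi^2 + κ) * a t) ^ 2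
          + (σ * (n:ℝ)^2 * Real.pi^2 + 1) * (n:ℝ)^2 * Real.pi^2 * (a t) ^ 2
          + ∫ s in (0:ℝ)..t, (μ * (n:ℝ)^2 * Real.pi^2 + κ)
              * (σ * (n:ℝ)^2 * Real.pi^2 + 1) * (n:ℝ)^2 * Real.pi^2 * (a s) ^ 2
        ≤ (b 0 + (μ * (n:ℝ)^2 * Real.pi^2 + κ) * a 0) ^ 2
          + (σ * (n:ℝ)^2 * Real.pi^2 + 1) * (n:ℝ)^2 * Real.pi^2 * (a 0) ^ 2
          + (∫ s in (0:ℝ)..t, (μ * (n:ℝ)^2 * Real.pi^2 + κ) * (b s) ^ 2)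
          + (8 * ((μ + κ) ^ 2 + σ) / (σ * (μ * (n:ℝ)^2 * Real.pi^2 + κ)))
              * ∫ s in (0:ℝ)..t, (f s) ^ 2 :=
  modal_shifted_energy_estimate_general μ κ σ T n f a b hμ hκ hσ hn hf2 ha hrhs hb
end

section
/- Let μ, σ > 0, κ ≥ 0, r > 0 and set Ḡ = κ²r(κ + μπ²)/(3μπ²(r+1)²(1+σπ²)). Then inf{ 1/(1−Ḡp) + (r+1)²(1+σπ²)(1+p)/(pμr(κ+μπ²)) : p > 0, Ḡp < 1 } = (1 + κ/(πμ√3))² + (r+1)²(1+σπ²)/(rμ(κ+μπ²)). -/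
/-!
Write `Ḡ = G`, `s = κ/(πμ√3)` and `A = (r+1)²(1+σπ²)/(rμ(κ+μπ²))`; the constants are arranged so that
`s² = G·A`, and the objective is `1/(1 - G p) + A + A/p`. Multiplied by `(1 - G p) p`, the gap to
`(1+s)² + A` becomes `A - 2s(1+s)p + G(1+s)²p²`, which is `(A - s(1+s)p)²/A ≥ 0`. For `κ > 0`
the bound is attained at `p = A/(s(1+s))`; for `κ = 0` we have `G = 0` and it is approached
as `p → ∞`.
-/

open Set Filter Topology

noncomputable def gainCost (G A p : ℝ) : ℝ := 1 / (1 - G * p) + A * (1 + p) / p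

section gainCost

variable {G A s p : ℝ}

theorem gainCost_eq (hp : p ≠ 0) : gainCost G A p = 1 / (1 - G * p) + A + A / p := by
  rw [gainCost]
  field_simp
  ring

theorem sq_one_add_add_le_gainCost (hA : 0 < A) (hs2 : s ^ 2 = G * A) (hp : 0 < p)
    (hGp : G * p < 1) : (1 + s) ^ 2 + A ≤ gainCost G A p := by
  have hq : 0 < 1 - G * p := by linarith
  have hgap : 0 ≤ A - 2 * s * (1 + s) * p + G * (1 + s) ^ 2 * p ^ 2 := by
    have hsq : A * (A - 2 * s * (1 + s) * p + G * (1 + s) ^ 2 * p ^ 2)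
        = (A - s * (1 + s) * p) ^ 2 := by linear_combination -(1 + s) ^ 2 * p ^ 2 * hs2
    exact nonneg_of_mul_nonneg_right (hsq ▸ sq_nonneg _) hA
  rw [gainCost_eq hp.ne', add_right_comm, add_le_add_iff_right, ← sub_nonneg]
  have hdiff : 1 / (1 - G * p) + A / p - (1 + s) ^ 2
      = (A - 2 * s * (1 + s) * p + G * (1 + s) ^ 2 * p ^ 2) / ((1 - G * p) * p) := by
    field_simp
    linear_combination p * hs2
  rw [hdiff]
  positivity

theorem gainCost_optimal (hA : 0 < A) (hs : 0 < s) (hs2 : s ^ 2 = G * A) :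
    G * (A / (s * (1 + s))) = s / (1 + s) ∧ gainCost G A (A / (s * (1 + s))) = (1 + s) ^ 2 + A := by
  have hGp : G * (A / (s * (1 + s))) = s / (1 + s) := by
    field_simp
    linear_combination -hs2
  refine ⟨hGp, ?_⟩
  rw [gainCost_eq (by positivity), hGp]
  field_simp
  ring

theorem tendsto_gainCost_zero_atTop (A : ℝ) : Tendsto (gainCost 0 A) atTop (𝓝 (1 + A)) := by
  have hlim : Tendsto (fun p : ℝ ↦ 1 + A + A * p⁻¹) atTop (𝓝 (1 + A)) := by
    simpa using (tendsto_inv_atTop_zero.const_mul A).const_add (1 + A)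
  refine hlim.congr' ((eventually_gt_atTop 0).mono fun p hp ↦ ?_)
  rw [gainCost_eq hp.ne']
  simp [div_eq_mul_inv]

theorem isGLB_gainCost (hA : 0 < A) (hs : 0 ≤ s) (hs2 : s ^ 2 = G * A) :
    IsGLB (gainCost G A '' {p | 0 < p ∧ G * p < 1}) ((1 + s) ^ 2 + A) := by
  refine ⟨?_, fun b hb ↦ ?_⟩
  · rintro _ ⟨p, ⟨hp, hGp⟩, rfl⟩
    exact sq_one_add_add_le_gainCost hA hs2 hp hGp
  rcases hs.eq_or_lt with rfl | hs
  · obtain rfl : G = 0 := by nlinarith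
    refine ge_of_tendsto (by simpa using tendsto_gainCost_zero_atTop A) ?_
    filter_upwards [eventually_gt_atTop 0] with p hp
    exact hb ⟨p, ⟨hp, by simp⟩, rfl⟩
  · obtain ⟨hGp, hval⟩ := gainCost_optimal hA hs hs2
    refine hval ▸ hb ⟨_, ⟨by positivity, ?_⟩, rfl⟩
    rw [hGp, div_lt_one (by positivity)]
    linarith

end gainCost

/-- With Ḡ = κ²r(κ+μπ²)/(3μπ²(r+1)²(1+σπ²)), the infimum of
1/(1−Ḡp) + (r+1)²(1+σπ²)(1+p)/(pμr(κ+μπ²)) over p > 0 with Ḡp < 1 equals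
(1 + κ/(πμ√3))² + (r+1)²(1+σπ²)/(rμ(κ+μπ²)). -/
theorem inf_gain_identity (μ σ κ r : ℝ)
    (hμ : 0 < μ) (hσ : 0 < σ) (hr : 0 < r) (hκ : 0 ≤ κ) :
    IsGLB
      { v : ℝ | ∃ p : ℝ, 0 < p ∧
          (κ^2 * r * (κ + μ * Real.pi^2)
            / (3 * μ * Real.pi^2 * (r+1)^2 * (1 + σ * Real.pi^2))) * p < 1 ∧
          v = 1 / (1 - (κ^2 * r * (κ + μ * Real.pi^2)
                / (3 * μ * Real.pi^2 * (r+1)^2 * (1 + σ * Real.pi^2))) * p)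
            + (r+1)^2 * (1 + σ * Real.pi^2) * (1 + p) / (p * μ * r * (κ + μ * Real.pi^2)) }
      ((1 + κ / (Real.pi * μ * Real.sqrt 3)) ^ 2
        + (r+1)^2 * (1 + σ * Real.pi^2) / (r * μ * (κ + μ * Real.pi^2))) := by
  have hπ := Real.pi_pos
  set G := κ^2 * r * (κ + μ * Real.pi^2) / (3 * μ * Real.pi^2 * (r+1)^2 * (1 + σ * Real.pi^2)) with hG
  set A := (r+1)^2 * (1 + σ * Real.pi^2) / (r * μ * (κ + μ * Real.pi^2)) with hA
  have hs2 : (κ / (Real.pi * μ * Real.sqrt 3)) ^ 2 = G * A := by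
    rw [hG, hA, div_pow, mul_pow, mul_pow, Real.sq_sqrt (by norm_num)]
    field_simp
  convert isGLB_gainCost (by positivity) (by positivity) hs2 using 1
  ext v
  refine exists_congr fun p ↦ ⟨fun ⟨hp, hGp, hv⟩ ↦ ⟨⟨hp, hGp⟩, ?_⟩, fun ⟨⟨hp, hGp⟩, hv⟩ ↦ ⟨hp, hGp, ?_⟩⟩
  · rw [hv, gainCost, hA]
    field_simp
  · rw [← hv, gainCost, hA]
    field_simp
end

section
/- Let γ, k, Q, r, μ, σ > 0, κ ≥ 0, and suppose γ > γ*, where γ* = 2 / (1 − (μrk³Q/(1+σπ²))((1+κ/(πμ√3))² + (r+1)²(1+σπ²)/(rμ(κ+μπ²)))), assuming the denominator is positive. Then there exists a constant A > 0 such that for all φ ∈ H²(0,1) with φ'(0)=φ'(1)=0 and ∫₀¹φ=0, all u ∈ H¹₀(0,1), and all (ξ,w) ∈ ℝ²: q(ξ,w,φ,u) ≥ A(ξ² + w² + ‖u‖²_{H¹} + ‖φ‖²_{H²}), where q(ξ,w,φ,u) = kξ² + ((γ−2)/(2k))(w+kξ)² + Qκ‖u‖₂² + Qμ‖u'‖₂²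 + Qκr‖φ‖₂² + Qr(σκ+μ)‖φ'‖₂² + Qμσr‖φ''‖₂² + (γk³r²/2)Q² I² − γkQr(w+kξ)I, with I = ∫₀¹(κxφ(x) − ((r+1)/r)u(x) + μφ'(x))dx. -/
open MeasureTheory Set

/-- The instantaneous cost functional q(ξ,w,φ,u) of the tank-liquid system,
expressed through φ, φ', φ'', u, u'. -/
noncomputable def qCost (γ k Q r μ σ κ : ℝ) (ξ w : ℝ) (φ φ' φ'' u u' : ℝ → ℝ) : ℝ :=
  k * ξ^2 + ((γ - 2) / (2*k)) * (w + k*ξ)^2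
    + Q * κ * (∫ x in Ioo (0:ℝ) 1, (u x)^2)
    + Q * μ * (∫ x in Ioo (0:ℝ) 1, (u' x)^2)
    + Q * κ * r * (∫ x in Ioo (0:ℝ) 1, (φ x)^2)
    + Q * r * (σ*κ + μ) * (∫ x in Ioo (0:ℝ) 1, (φ' x)^2)
    + Q * μ * σ * r * (∫ x in Ioo (0:ℝ) 1, (φ'' x)^2)
    + (γ * k^3 * r^2 / 2) * Q^2
        * (∫ x in Ioo (0:ℝ) 1, (κ * x * φ x - ((r+1)/r) * u x + μ * φ' x))^2
    - γ * k * Q * r * (w + k*ξ)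
        * (∫ x in Ioo (0:ℝ) 1, (κ * x * φ x - ((r+1)/r) * u x + μ * φ' x))

/-- The critical gain γ* of assumption (A). -/
noncomputable def gammaStar (k Q r μ σ κ : ℝ) : ℝ :=
  2 / (1 - (μ * r * k^3 * Q / (1 + σ * Real.pi^2))
    * ((1 + κ / (Real.pi * μ * Real.sqrt 3))^2
      + (r+1)^2 * (1 + σ * Real.pi^2) / (r * μ * (κ + μ * Real.pi^2))))

/-!
Apart from k ξ² and the (w + kξ)² term, q consists of an "energy" E, a positive combination of
‖u‖², ‖u'‖², ‖φ‖², ‖φ'‖², ‖φ''‖², and of the coupling integral I, which enters through I² and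
a cross term with w + kξ. Wirtinger's inequality π²‖f‖² ≤ ‖f'‖² (for f = u and f = φ', which
vanish at both ends), the mean-zero bounds ‖φ‖² ≤ ‖φ'‖² and (∫ xφ)² ≤ ‖φ'‖²/64, and
Cauchy–Schwarz give I² ≤ D E for an explicit D, and assumption (A) says exactly that
X = k (kQr)² D < 1. Young's inequality absorbs the cross term at the price of part of the
(w + kξ)² term and part of E; a weight that leaves a positive share of both exists precisely
when γ (1 - X) > 2, i.e. γ > γ*.

Wirtinger's inequality comes from the cotangent trick: for H = π cot(πx) f² one has
f'² - π² f² - H' = (f' - π cot(πx) f)² ≥ 0, and H vanishes at both ends because f does.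
-/

open Real Filter Topology

instance : IsProbabilityMeasure (volume.restrict (Ioo (0:ℝ) 1)) :=
  ⟨by simp [Real.volume_Ioo]⟩

theorem sq_integral_le_integral_sq {Ω : Type*} [MeasurableSpace Ω] {μ : Measure Ω}
    [IsProbabilityMeasure μ] {f : Ω → ℝ} (hf : MemLp f 2 μ) :
    (∫ x, f x ∂μ) ^ 2 ≤ ∫ x, f x ^ 2 ∂μ := by
  have h := ProbabilityTheory.variance_nonneg f μ
  rw [ProbabilityTheory.variance_eq_sub hf] at h
  simpa [sub_nonneg] using h

theorem ContinuousOn.memLp_two_Ioo {f : ℝ → ℝ} {a b : ℝ} (hf : ContinuousOn f (Icc a b)) :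
    MemLp f 2 (volume.restrict (Ioo a b)) :=
  (memLp_two_iff_integrable_sq ((hf.mono Ioo_subset_Icc_self).aestronglyMeasurable
    measurableSet_Ioo)).mpr ((hf.pow 2).integrableOn_Icc.mono_set Ioo_subset_Icc_self)

noncomputable def cotWeight (f : ℝ → ℝ) (x : ℝ) : ℝ := π * Real.cot (π * x) * f x ^ 2

theorem hasDerivAt_cotWeight {f : ℝ → ℝ} {d x : ℝ} (hf : HasDerivAt f d x)
    (hx : sin (π * x) ≠ 0) :
    HasDerivAt (cotWeight f) (d ^ 2 - π ^ 2 * f x ^ 2 - (d - π * cot (π * x) * f x) ^ 2) x := by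
  have hlin : HasDerivAt (fun y => π * y) π x := by simpa using (hasDerivAt_id x).const_mul π
  have hcot : HasDerivAt (fun y => cos (π * y) / sin (π * y))
      ((-sin (π * x) * π * sin (π * x) - cos (π * x) * (cos (π * x) * π)) / sin (π * x) ^ 2) x :=
    hlin.cos.div hlin.sin hx
  refine ((hcot.const_mul π).mul (hf.pow 2)).congr_deriv ?_ |>.congr_of_eventuallyEq ?_
  · rw [cot_eq_cos_div_sin, Pi.pow_apply]
    field_simp
    ring
  · exact Eventually.of_forall fun y => by simp [cotWeight, cot_eq_cos_div_sin]

theorem tendsto_cotWeight_zero {f : ℝ → ℝ} {d : ℝ} (hf : HasDerivAt f d 0) (h0 : f 0 = 0) :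
    Tendsto (cotWeight f) (𝓝[≠] 0) (𝓝 0) := by
  have hsin : HasDerivAt (fun x => sin (π * x)) π 0 := by
    simpa using ((hasDerivAt_id (0:ℝ)).const_mul π).sin
  have hf0 : Tendsto f (𝓝[≠] 0) (𝓝 0) := by
    simpa [h0] using hf.continuousAt.tendsto.mono_left nhdsWithin_le_nhds
  have hcos : Tendsto (fun x => cos (π * x)) (𝓝[≠] 0) (𝓝 1) := by
    have : Continuous (fun x => cos (π * x)) := by fun_prop
    simpa using (this.tendsto 0).mono_left nhdsWithin_le_nhds
  have hfs : Tendsto (fun x => x⁻¹ * f x) (𝓝[≠] 0) (𝓝 d) := by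
    simpa [h0] using hf.tendsto_slope_zero
  have hsins : Tendsto (fun x => x⁻¹ * sin (π * x)) (𝓝[≠] 0) (𝓝 π) := by
    simpa using hsin.tendsto_slope_zero
  -- π cot(πx) f(x)² = π cos(πx) · (x⁻¹ f(x)) · f(x) / (x⁻¹ sin(πx)) → π · 1 · d · 0 / π
  have key := (((tendsto_const_nhds (x := π)).mul hcos).mul (hfs.mul hf0)).div hsins pi_ne_zero
  simp only [mul_zero, zero_div] at key
  refine key.congr' (eventually_nhdsWithin_of_forall fun x hx => ?_)
  simp only [Pi.div_apply, cotWeight, cot_eq_cos_div_sin]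
  rcases eq_or_ne (sin (π * x)) 0 with hs | hs
  · simp [hs]
  · field_simp [mem_compl_singleton_iff.mp hx]

theorem tendsto_cotWeight_one_sub {f : ℝ → ℝ} {d : ℝ} (hf : HasDerivAt f d 1) (h1 : f 1 = 0) :
    Tendsto (fun a => cotWeight f (1 - a)) (𝓝[≠] 0) (𝓝 0) := by
  have hrefl : ∀ a, cotWeight f (1 - a) = -cotWeight (fun x => f (1 - x)) a := fun a => by
    simp only [cotWeight, cot_eq_cos_div_sin, mul_sub, mul_one, cos_pi_sub, sin_pi_sub]
    ring
  simpa [hrefl] using (tendsto_cotWeight_zero (HasDerivAt.comp_const_sub 1 0 (by simpa using hf))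
    (by simpa using h1)).neg

theorem pi_sq_mul_intervalIntegral_sq_le {f f' : ℝ → ℝ} {a b : ℝ} (ha : 0 < a) (hab : a ≤ b)
    (hb : b < 1) (hf : ∀ x ∈ Icc a b, HasDerivAt f (f' x) x)
    (hf' : IntegrableOn (fun x => f' x ^ 2) (Icc a b)) :
    π ^ 2 * ∫ x in a..b, f x ^ 2 ≤ (∫ x in a..b, f' x ^ 2) + cotWeight f a - cotWeight f b := by
  have hsin : ∀ x ∈ Icc a b, sin (π * x) ≠ 0 := fun x hx =>
    (sin_pos_of_pos_of_lt_pi (by nlinarith [pi_pos, hx.1]) (by nlinarith [pi_pos, hx.2])).ne'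
  have hH : ∀ x ∈ Icc a b, HasDerivAt (cotWeight f)
      (f' x ^ 2 - π ^ 2 * f x ^ 2 - (f' x - π * cot (π * x) * f x) ^ 2) x :=
    fun x hx => hasDerivAt_cotWeight (hf x hx) (hsin x hx)
  have hf2 : IntegrableOn (fun x => π ^ 2 * f x ^ 2) (Icc a b) :=
    (continuousOn_const.mul ((HasDerivAt.continuousOn hf).pow 2)).integrableOn_Icc
  have key := intervalIntegral.sub_le_integral_of_hasDeriv_right_of_le hab
    (fun x hx => (hH x hx).continuousAt.continuousWithinAt)
    (fun x hx => (hH x (Ioo_subset_Icc_self hx)).hasDerivWithinAt) (hf'.sub hf2)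
    (fun x _ => sub_le_self _ (sq_nonneg _))
  simp only [Pi.sub_apply] at key
  rw [intervalIntegral.integral_sub ((intervalIntegrable_iff_integrableOn_Icc_of_le hab).mpr hf')
    ((intervalIntegrable_iff_integrableOn_Icc_of_le hab).mpr hf2),
    intervalIntegral.integral_const_mul] at key
  linarith

theorem tendsto_intervalIntegral_one_sub {g : ℝ → ℝ} (hg : ContinuousOn g (Icc 0 1)) :
    Tendsto (fun a => ∫ x in a..(1 - a), g x) (𝓝[>] 0) (𝓝 (∫ x in Ioo (0:ℝ) 1, g x)) := by
  have hF : ContinuousOn (fun t => ∫ x in (0:ℝ)..t, g x) (Icc 0 1) := by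
    simpa [uIcc_of_le zero_le_one] using intervalIntegral.continuousOn_primitive_interval
      (μ := volume) (a := 0) (b := 1) (by simpa [uIcc_of_le zero_le_one] using hg.integrableOn_Icc)
  have hint : ∀ t ∈ Icc (0:ℝ) 1, IntervalIntegrable g volume 0 t := fun t ht =>
    (hg.mono (Icc_subset_Icc le_rfl ht.2)).intervalIntegrable_of_Icc ht.1
  have hsymm : MapsTo (fun a : ℝ => 1 - a) (Icc 0 1) (Icc 0 1) :=
    fun a ha => ⟨sub_nonneg.2 ha.2, sub_le_self 1 ha.1⟩
  have hc : ContinuousOn (fun a => ∫ x in a..(1 - a), g x) (Icc 0 1) :=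
    ((hF.comp (continuousOn_const.sub continuousOn_id) hsymm).sub hF).congr fun a ha =>
      (intervalIntegral.integral_interval_sub_left (hint _ (hsymm ha)) (hint a ha)).symm
  have := ((hc 0 ⟨le_rfl, zero_le_one⟩).mono Ioc_subset_Icc_self).tendsto
  rwa [nhdsWithin_Ioc_eq_nhdsGT zero_lt_one, sub_zero, intervalIntegral.integral_of_le zero_le_one,
    integral_Ioc_eq_integral_Ioo] at this

theorem pi_sq_mul_integral_sq_le_integral_deriv_sq {f f' : ℝ → ℝ}
    (hf : ∀ x ∈ Icc (0:ℝ) 1, HasDerivAt f (f' x) x) (h0 : f 0 = 0) (h1 : f 1 = 0)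
    (hf' : MemLp f' 2 (volume.restrict (Ioo (0:ℝ) 1))) :
    π ^ 2 * ∫ x in Ioo (0:ℝ) 1, f x ^ 2 ≤ ∫ x in Ioo (0:ℝ) 1, f' x ^ 2 := by
  have hf'2 : IntegrableOn (fun x => f' x ^ 2) (Icc 0 1) :=
    (integrableOn_Icc_iff_integrableOn_Ioo).mpr hf'.integrable_sq
  have hlow := (tendsto_intervalIntegral_one_sub ((HasDerivAt.continuousOn hf).pow 2)).const_mul
    (π ^ 2)
  have hhigh : Tendsto
      (fun a => (∫ x in Ioo (0:ℝ) 1, f' x ^ 2) + cotWeight f a - cotWeight f (1 - a))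
      (𝓝[>] 0) (𝓝 (∫ x in Ioo (0:ℝ) 1, f' x ^ 2)) := by
    simpa using ((tendsto_const_nhds.add
      (tendsto_cotWeight_zero (hf 0 ⟨le_rfl, zero_le_one⟩) h0)).sub
      (tendsto_cotWeight_one_sub (hf 1 ⟨zero_le_one, le_rfl⟩) h1)).mono_left (nhdsGT_le_nhdsNE 0)
  refine le_of_tendsto_of_tendsto hlow hhigh ?_
  filter_upwards [Ioo_mem_nhdsGT (show (0:ℝ) < 1 / 2 by norm_num)] with a ha
  have hsub : Icc a (1 - a) ⊆ Icc 0 1 := Icc_subset_Icc ha.1.le (by linarith [ha.1])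
  calc π ^ 2 * ∫ x in a..(1 - a), f x ^ 2
      ≤ (∫ x in a..(1 - a), f' x ^ 2) + cotWeight f a - cotWeight f (1 - a) :=
        pi_sq_mul_intervalIntegral_sq_le ha.1 (by linarith [ha.2]) (by linarith [ha.1])
          (fun x hx => hf x (hsub hx)) (hf'2.mono_set hsub)
    _ ≤ (∫ x in Ioo (0:ℝ) 1, f' x ^ 2) + cotWeight f a - cotWeight f (1 - a) := by
        gcongr
        rw [intervalIntegral.integral_of_le (by linarith [ha.2])]
        exact setIntegral_mono_set hf'.integrable_sq (Eventually.of_forall fun x => sq_nonneg _)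
          (Eventually.of_forall fun x hx => ⟨ha.1.trans hx.1, by linarith [hx.2, ha.1]⟩)

theorem abs_sub_le_integral_abs_deriv {f f' : ℝ → ℝ}
    (hf : ∀ x ∈ Icc (0:ℝ) 1, HasDerivAt f (f' x) x)
    (hf' : IntegrableOn f' (Ioo (0:ℝ) 1)) {x y : ℝ} (hx : x ∈ Icc (0:ℝ) 1)
    (hy : y ∈ Icc (0:ℝ) 1) :
    |f x - f y| ≤ ∫ t in Ioo (0:ℝ) 1, |f' t| := by
  have hsub : uIcc y x ⊆ Icc 0 1 := uIcc_subset_Icc hy hx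
  have hf'Icc : IntegrableOn f' (Icc 0 1) := (integrableOn_Icc_iff_integrableOn_Ioo).mpr hf'
  rw [← intervalIntegral.integral_eq_sub_of_hasDerivAt (fun t ht => hf t (hsub ht))
    (hf'Icc.mono_set hsub).intervalIntegrable, ← integral_Ioc_eq_integral_Ioo]
  calc |∫ t in y..x, f' t| ≤ ∫ t in uIoc y x, |f' t| :=
        intervalIntegral.norm_integral_le_integral_norm_uIoc (f := f')
    _ ≤ ∫ t in Ioc 0 1, |f' t| :=
        setIntegral_mono_set (hf'Icc.mono_set Ioc_subset_Icc_self).norm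
          (Eventually.of_forall fun _ => abs_nonneg _)
          (Ioc_subset_Ioc (le_min hy.1 hx.1) (max_le hy.2 hx.2)).eventuallyLE

theorem integral_sq_le_integral_deriv_sq_of_integral_eq_zero {f f' : ℝ → ℝ}
    (hf : ∀ x ∈ Icc (0:ℝ) 1, HasDerivAt f (f' x) x)
    (hf' : MemLp f' 2 (volume.restrict (Ioo (0:ℝ) 1)))
    (hmean : ∫ x in Ioo (0:ℝ) 1, f x = 0) :
    ∫ x in Ioo (0:ℝ) 1, f x ^ 2 ≤ ∫ x in Ioo (0:ℝ) 1, f' x ^ 2 := by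
  set M := ∫ t in Ioo (0:ℝ) 1, |f' t|
  have hfc : ContinuousOn f (Icc 0 1) := HasDerivAt.continuousOn hf
  have hbound : ∀ x ∈ Icc (0:ℝ) 1, |f x| ≤ M := by
    intro x hx
    have hrep : f x = ∫ y in Ioo (0:ℝ) 1, (f x - f y) := by
      rw [integral_sub (integrable_const _) (hfc.integrableOn_Icc.mono_set Ioo_subset_Icc_self),
        integral_const, hmean]
      simp
    have h := norm_integral_le_of_norm_le_const (μ := volume.restrict (Ioo (0:ℝ) 1))
      (f := fun y => f x - f y) (C := M) (ae_restrict_of_forall_mem measurableSet_Ioo fun y hy =>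
        abs_sub_le_integral_abs_deriv hf (hf'.integrable one_le_two) hx (Ioo_subset_Icc_self hy))
    rw [hrep]
    simpa using h
  have hsq : ∫ x in Ioo (0:ℝ) 1, f x ^ 2 ≤ M ^ 2 := by
    have h := norm_integral_le_of_norm_le_const (μ := volume.restrict (Ioo (0:ℝ) 1))
      (f := fun x => f x ^ 2) (C := M ^ 2) (ae_restrict_of_forall_mem measurableSet_Ioo
        fun x hx => by
          simpa using pow_le_pow_left₀ (abs_nonneg _) (hbound x (Ioo_subset_Icc_self hx)) 2)
    exact (le_abs_self _).trans (by simpa using h)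
  simpa using hsq.trans (sq_integral_le_integral_sq hf'.abs)

theorem sq_integral_id_mul_le_of_integral_eq_zero {f f' : ℝ → ℝ}
    (hf : ∀ x ∈ Icc (0:ℝ) 1, HasDerivAt f (f' x) x)
    (hf' : MemLp f' 2 (volume.restrict (Ioo (0:ℝ) 1)))
    (hmean : ∫ x in Ioo (0:ℝ) 1, f x = 0) :
    (∫ x in Ioo (0:ℝ) 1, x * f x) ^ 2 ≤ 1 / 64 * ∫ x in Ioo (0:ℝ) 1, f' x ^ 2 := by
  -- integrate by parts against w, the primitive of x - 1/2 vanishing at both ends; |w| ≤ 1/8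
  set w : ℝ → ℝ := fun x => (x ^ 2 - x) / 2
  have hfc : ContinuousOn f (Icc 0 1) := HasDerivAt.continuousOn hf
  have hf'i : IntegrableOn f' (Ioo 0 1) := hf'.integrable one_le_two
  have hw : ∀ x ∈ uIcc (0:ℝ) 1, HasDerivAt w (x - 1 / 2) x := fun x _ =>
    (((hasDerivAt_pow 2 x).sub (hasDerivAt_id x)).div_const 2).congr_deriv (by push_cast; ring)
  have hparts : ∫ x in Ioo (0:ℝ) 1, x * f x = -∫ x in Ioo (0:ℝ) 1, w x * f' x := by
    have h := intervalIntegral.integral_mul_deriv_eq_deriv_mul hw (by rwa [uIcc_of_le zero_le_one])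
      ((by fun_prop : Continuous fun x : ℝ => x - 1 / 2).intervalIntegrable 0 1)
      ((intervalIntegrable_iff_integrableOn_Ioo_of_le zero_le_one).mpr hf'i)
    have hsplit : ∫ x in Ioo (0:ℝ) 1, (x - 1 / 2) * f x = ∫ x in Ioo (0:ℝ) 1, x * f x := by
      simp only [sub_mul]
      rw [integral_sub (f := fun x => x * f x) (g := fun x => 1 / 2 * f x)
        ((continuousOn_id.mul hfc).integrableOn_Icc.mono_set Ioo_subset_Icc_self)
        ((continuousOn_const.mul hfc).integrableOn_Icc.mono_set Ioo_subset_Icc_self),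
        integral_const_mul, hmean, mul_zero, sub_zero]
    simp only [intervalIntegral.integral_of_le zero_le_one, integral_Ioc_eq_integral_Ioo, w] at h
    norm_num at h
    linarith
  have hw8 : ∀ x ∈ Ioo (0:ℝ) 1, ‖w x * f' x‖ ≤ 1 / 8 * |f' x| := fun x hx => by
    rw [Real.norm_eq_abs, abs_mul]
    gcongr
    rw [abs_le, show w x = (x ^ 2 - x) / 2 from rfl]
    constructor <;> nlinarith [hx.1, hx.2, sq_nonneg (x - 1 / 2)]
  have hbound : |∫ x in Ioo (0:ℝ) 1, w x * f' x| ≤ 1 / 8 * ∫ x in Ioo (0:ℝ) 1, |f' x| := by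
    rw [← integral_const_mul]
    exact norm_integral_le_of_norm_le (hf'i.abs.const_mul _)
      (ae_restrict_of_forall_mem measurableSet_Ioo hw8)
  rw [hparts, neg_sq]
  calc (∫ x in Ioo (0:ℝ) 1, w x * f' x) ^ 2
      ≤ (1 / 8 * ∫ x in Ioo (0:ℝ) 1, |f' x|) ^ 2 :=
        sq_le_sq' (abs_le.mp hbound).1 (abs_le.mp hbound).2
    _ = 1 / 64 * (∫ x in Ioo (0:ℝ) 1, |f' x|) ^ 2 := by ring
    _ ≤ 1 / 64 * ∫ x in Ioo (0:ℝ) 1, f' x ^ 2 := by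
        gcongr
        simpa using sq_integral_le_integral_sq hf'.abs

theorem sq_add_le_mul_add_mul {a b A B M N : ℝ} (hA : 0 ≤ A) (hB : 0 ≤ B) (hM : 0 ≤ M)
    (hN : 0 ≤ N) (ha : a ^ 2 ≤ A * M) (hb : b ^ 2 ≤ B * N) :
    (a + b) ^ 2 ≤ (A + B) * (M + N) := by
  have hab : (2 * a * b) ^ 2 ≤ (A * N + B * M) ^ 2 := by
    nlinarith [mul_le_mul ha hb (sq_nonneg b) (mul_nonneg hA hM), sq_nonneg (A * N - B * M)]
  nlinarith [(abs_le_of_sq_le_sq' hab (by positivity)).2]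

theorem exists_young_weight {γ X : ℝ} (hX : 0 ≤ X) (hX1 : X < 1) (hγ : 2 < γ * (1 - X)) :
    ∃ η, 0 < η ∧ η < γ - 2 ∧ (γ ^ 2 - γ * η) * X < 2 * η := by
  have hγ2 : 2 < γ := by nlinarith [mul_pos (sub_pos.2 hX1) (by nlinarith : (0:ℝ) < γ)]
  have he : 0 < 2 + γ * X := by positivity
  -- with δ = γ(1 - X) - 2 > 0: η (2 + γX) exceeds γ²X by δ, and γ - 2 exceeds η by δ / (2 + γX)
  refine ⟨(γ ^ 2 * X + (γ * (1 - X) - 2)) / (2 + γ * X), by positivity, ?_, ?_⟩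
  · rw [div_lt_iff₀ he]
    nlinarith
  · have h := div_mul_cancel₀ (γ ^ 2 * X + (γ * (1 - X) - 2)) he.ne'
    nlinarith

theorem exists_pos_le_coupled_quadratic {k β D γ : ℝ} (hk : 0 < k) (hD : 0 ≤ D)
    (hX : k * β ^ 2 * D < 1) (hγ : 2 / (1 - k * β ^ 2 * D) < γ) :
    ∃ c > 0, ∀ s N I : ℝ, 0 ≤ N → I ^ 2 ≤ D * N →
      c * (s ^ 2 + N)
        ≤ (γ - 2) / (2 * k) * s ^ 2 + N + γ * k * β ^ 2 / 2 * I ^ 2 - γ * β * s * I := by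
  have hX0 : 0 ≤ k * β ^ 2 * D := by positivity
  generalize hXdef : k * β ^ 2 * D = X at hX hγ hX0
  obtain ⟨η, hη, hηγ, hηX⟩ :=
    exists_young_weight hX0 hX (by rwa [div_lt_iff₀ (by linarith)] at hγ)
  have hcoef : 0 ≤ (γ ^ 2 - γ * η) * k * β ^ 2 / (2 * η) := by
    have : 0 < γ ^ 2 - γ * η := by nlinarith
    positivity
  set c₁ := (γ - 2 - η) / (2 * k)
  set c₂ := 1 - (γ ^ 2 - γ * η) * X / (2 * η)
  have hc₁ : 0 < c₁ := div_pos (by linarith) (by positivity)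
  have hc₂ : 0 < c₂ := sub_pos.2 ((div_lt_one (by positivity)).2 hηX)
  refine ⟨min c₁ c₂, lt_min hc₁ hc₂, fun s N I hN hI => ?_⟩
  have young : 2 * s * (γ * β * I) ≤ η / k * s ^ 2 + (η / k)⁻¹ * (γ * β * I) ^ 2 :=
    two_mul_le_add_mul_sq (by positivity)
  have absorb : (γ ^ 2 - γ * η) * k * β ^ 2 / (2 * η) * I ^ 2
      ≤ (γ ^ 2 - γ * η) * X / (2 * η) * N := by
    calc (γ ^ 2 - γ * η) * k * β ^ 2 / (2 * η) * I ^ 2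
        ≤ (γ ^ 2 - γ * η) * k * β ^ 2 / (2 * η) * (D * N) := mul_le_mul_of_nonneg_left hI hcoef
      _ = (γ ^ 2 - γ * η) * X / (2 * η) * N := by rw [← hXdef]; ring
  calc min c₁ c₂ * (s ^ 2 + N) ≤ c₁ * s ^ 2 + c₂ * N := by
        nlinarith [mul_le_mul_of_nonneg_right (min_le_left c₁ c₂) (sq_nonneg s),
          mul_le_mul_of_nonneg_right (min_le_right c₁ c₂) hN]
    _ ≤ c₁ * s ^ 2 + N - (γ ^ 2 - γ * η) * k * β ^ 2 / (2 * η) * I ^ 2 := by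
        simp only [c₂]; linarith
    _ = (γ - 2) / (2 * k) * s ^ 2 + N + γ * k * β ^ 2 / 2 * I ^ 2
          - (η / k * s ^ 2 + (η / k)⁻¹ * (γ * β * I) ^ 2) / 2 := by
        simp only [c₁]; field_simp; ring
    _ ≤ _ := by linarith

theorem exists_pos_le_sheared_coupled_quadratic {k β D γ : ℝ} (hk : 0 < k) (hD : 0 ≤ D)
    (hX : k * β ^ 2 * D < 1) (hγ : 2 / (1 - k * β ^ 2 * D) < γ) :
    ∃ c > 0, ∀ ξ w N I : ℝ, 0 ≤ N → I ^ 2 ≤ D * N →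
      c * (ξ ^ 2 + w ^ 2 + N) ≤ k * ξ ^ 2 + (γ - 2) / (2 * k) * (w + k * ξ) ^ 2 + N
        + γ * k * β ^ 2 / 2 * I ^ 2 - γ * β * (w + k * ξ) * I := by
  obtain ⟨c, hc, hform⟩ := exists_pos_le_coupled_quadratic hk hD hX hγ
  set m := min k c
  have hm : 0 < m := lt_min hk hc
  refine ⟨m / (2 + 2 * k ^ 2), by positivity, fun ξ w N I hN hI => ?_⟩
  have hshear : ξ ^ 2 + w ^ 2 ≤ (2 + 2 * k ^ 2) * (ξ ^ 2 + (w + k * ξ) ^ 2) := by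
    nlinarith [sq_nonneg (w + 2 * k * ξ), sq_nonneg (k * ξ), sq_nonneg (k * (w + k * ξ))]
  have hmN : m / (2 + 2 * k ^ 2) * N ≤ m * N :=
    mul_le_mul_of_nonneg_right (div_le_self hm.le (by nlinarith)) hN
  calc m / (2 + 2 * k ^ 2) * (ξ ^ 2 + w ^ 2 + N)
        = m / (2 + 2 * k ^ 2) * (ξ ^ 2 + w ^ 2) + m / (2 + 2 * k ^ 2) * N := by ring
    _ ≤ m / (2 + 2 * k ^ 2) * ((2 + 2 * k ^ 2) * (ξ ^ 2 + (w + k * ξ) ^ 2)) + m * N :=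
        add_le_add (mul_le_mul_of_nonneg_left hshear (by positivity)) hmN
    _ = m * (ξ ^ 2 + (w + k * ξ) ^ 2) + m * N := by field_simp
    _ ≤ k * ξ ^ 2 + c * ((w + k * ξ) ^ 2 + N) := by
        nlinarith [mul_le_mul_of_nonneg_right (min_le_left k c) (sq_nonneg ξ),
          mul_le_mul_of_nonneg_right (min_le_right k c) (add_nonneg (sq_nonneg (w + k * ξ)) hN)]
    _ ≤ _ := by linarith [hform (w + k * ξ) N I hN hI]

noncomputable def couplingConst (Q r μ σ κ : ℝ) : ℝ :=
  μ * (1 + κ / (π * μ * √3)) ^ 2 / (Q * r * (1 + σ * π ^ 2))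
    + (r + 1) ^ 2 / (r ^ 2 * Q * (κ + μ * π ^ 2))

/-- `u₀, u₁, φ₀, φ₁, φ₂` stand for the squared L² norms of `u, u', φ, φ', φ''` on `(0, 1)`. -/
def costEnergy (Q r μ σ κ u₀ u₁ φ₀ φ₁ φ₂ : ℝ) : ℝ :=
  Q * κ * u₀ + Q * μ * u₁ + Q * κ * r * φ₀ + Q * r * (σ * κ + μ) * φ₁ + Q * μ * σ * r * φ₂

theorem integral_coupling_eq {ν : Measure ℝ} {φ u φ' : ℝ → ℝ} (a b c : ℝ)
    (hφ : Integrable (fun x => x * φ x) ν) (hu : Integrable u ν) (hφ' : Integrable φ' ν) :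
    ∫ x, (a * x * φ x - b * u x + c * φ' x) ∂ν
      = a * (∫ x, x * φ x ∂ν) - b * (∫ x, u x ∂ν) + c * ∫ x, φ' x ∂ν := by
  simp only [mul_assoc]
  rw [integral_add (f := fun x => a * (x * φ x) - b * u x) ((hφ.const_mul a).sub (hu.const_mul b))
    (hφ'.const_mul c), integral_sub (hφ.const_mul a) (hu.const_mul b), integral_const_mul,
    integral_const_mul, integral_const_mul]

section Cost

variable {Q r μ σ κ : ℝ}

theorem couplingConst_nonneg (hQ : 0 < Q) (hr : 0 < r) (hμ : 0 < μ) (hσ : 0 ≤ σ) (hκ : 0 ≤ κ) :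
    0 ≤ couplingConst Q r μ σ κ := by
  unfold couplingConst
  positivity

theorem mul_sq_mul_couplingConst (k : ℝ) (hQ : 0 < Q) (hr : 0 < r) (hμ : 0 < μ) (hσ : 0 ≤ σ)
    (hκ : 0 ≤ κ) :
    k * (k * Q * r) ^ 2 * couplingConst Q r μ σ κ
      = μ * r * k ^ 3 * Q / (1 + σ * π ^ 2)
        * ((1 + κ / (π * μ * √3)) ^ 2
          + (r + 1) ^ 2 * (1 + σ * π ^ 2) / (r * μ * (κ + μ * π ^ 2))) := by
  have : 0 < κ + μ * π ^ 2 := by positivity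
  have : 0 < 1 + σ * π ^ 2 := by positivity
  unfold couplingConst
  field_simp

theorem sq_coupling_phi_le {φ₀ φ₁ φ₂ Ix Id : ℝ} (hQ : 0 < Q) (hr : 0 < r) (hμ : 0 < μ)
    (hσ : 0 ≤ σ) (hκ : 0 ≤ κ) (hφ₀ : 0 ≤ φ₀) (hφ : π ^ 2 * φ₁ ≤ φ₂)
    (hIx : Ix ^ 2 ≤ 1 / 64 * φ₁) (hId : Id ^ 2 ≤ φ₁) :
    (κ * Ix + μ * Id) ^ 2
      ≤ μ * (1 + κ / (π * μ * √3)) ^ 2 / (Q * r * (1 + σ * π ^ 2))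
        * (Q * κ * r * φ₀ + Q * r * (σ * κ + μ) * φ₁ + Q * μ * σ * r * φ₂) := by
  have hφ₁ : 0 ≤ φ₁ := (sq_nonneg _).trans hId
  have hσπ : 0 < 1 + σ * π ^ 2 := by positivity
  -- the constant of `(A)`: |∫ x φ| ≤ c ‖φ'‖ with c = 1/(π√3), weaker than our 1/8
  set c := 1 / (π * √3)
  have hc : 1 / 64 ≤ c ^ 2 := by
    rw [div_pow, mul_pow, Real.sq_sqrt zero_le_three, one_pow]
    gcongr
    nlinarith [pi_le_four, pi_pos]
  have hκIx : (κ * Ix) ^ 2 ≤ κ * c * (κ * c * φ₁) := by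
    nlinarith [mul_le_mul_of_nonneg_left (hIx.trans (mul_le_mul_of_nonneg_right hc hφ₁))
      (sq_nonneg κ)]
  have hμId : (μ * Id) ^ 2 ≤ μ * (μ * φ₁) := by
    nlinarith [mul_le_mul_of_nonneg_left hId (sq_nonneg μ)]
  have hE : Q * r * μ * (1 + σ * π ^ 2) * φ₁
      ≤ Q * κ * r * φ₀ + Q * r * (σ * κ + μ) * φ₁ + Q * μ * σ * r * φ₂ := by
    have : 0 ≤ Q * κ * r * φ₀ + Q * r * σ * κ * φ₁ := by positivity
    nlinarith [mul_le_mul_of_nonneg_left hφ (by positivity : 0 ≤ Q * μ * σ * r)]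
  calc (κ * Ix + μ * Id) ^ 2 ≤ (κ * c + μ) * (κ * c * φ₁ + μ * φ₁) :=
        sq_add_le_mul_add_mul (by positivity) hμ.le (by positivity) (by positivity) hκIx hμId
    _ = μ * (1 + κ / (π * μ * √3)) ^ 2 / (Q * r * (1 + σ * π ^ 2))
        * (Q * r * μ * (1 + σ * π ^ 2) * φ₁) := by
        simp only [c]; field_simp; ring
    _ ≤ _ := mul_le_mul_of_nonneg_left hE (by positivity)

theorem sq_coupling_u_le {u₀ u₁ Iu : ℝ} (hQ : 0 < Q) (hr : 0 < r) (hμ : 0 < μ) (hκ : 0 ≤ κ)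
    (hu : π ^ 2 * u₀ ≤ u₁) (hIu : Iu ^ 2 ≤ u₀) :
    ((r + 1) / r * Iu) ^ 2
      ≤ (r + 1) ^ 2 / (r ^ 2 * Q * (κ + μ * π ^ 2)) * (Q * κ * u₀ + Q * μ * u₁) := by
  have hκπ : 0 < κ + μ * π ^ 2 := by positivity
  calc ((r + 1) / r * Iu) ^ 2
      ≤ (r + 1) ^ 2 / (r ^ 2 * Q * (κ + μ * π ^ 2)) * (Q * (κ + μ * π ^ 2) * u₀) := by
        rw [mul_pow]
        field_simp
        nlinarith [mul_le_mul_of_nonneg_left hIu (sq_nonneg (r + 1))]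
    _ ≤ _ := by
        gcongr
        nlinarith [mul_le_mul_of_nonneg_left hu (by positivity : 0 ≤ Q * μ)]

theorem sq_coupling_le_couplingConst_mul_costEnergy {u₀ u₁ φ₀ φ₁ φ₂ Ix Iu Id : ℝ}
    (hQ : 0 < Q) (hr : 0 < r) (hμ : 0 < μ) (hσ : 0 ≤ σ) (hκ : 0 ≤ κ)
    (hu₀ : 0 ≤ u₀) (hφ₀ : 0 ≤ φ₀) (hu : π ^ 2 * u₀ ≤ u₁) (hφ : π ^ 2 * φ₁ ≤ φ₂)
    (hIx : Ix ^ 2 ≤ 1 / 64 * φ₁) (hIu : Iu ^ 2 ≤ u₀) (hId : Id ^ 2 ≤ φ₁) :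
    (κ * Ix - (r + 1) / r * Iu + μ * Id) ^ 2
      ≤ couplingConst Q r μ σ κ * costEnergy Q r μ σ κ u₀ u₁ φ₀ φ₁ φ₂ := by
  have hφ₁ : 0 ≤ φ₁ := (sq_nonneg _).trans hId
  have hφ₂ : 0 ≤ φ₂ := (mul_nonneg (sq_nonneg π) hφ₁).trans hφ
  have hu₁ : 0 ≤ u₁ := (mul_nonneg (sq_nonneg π) hu₀).trans hu
  have hφpart := sq_coupling_phi_le hQ hr hμ hσ hκ hφ₀ hφ hIx hId
  have hupart := sq_coupling_u_le hQ hr hμ hκ hu hIu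
  rw [← neg_sq] at hupart
  calc (κ * Ix - (r + 1) / r * Iu + μ * Id) ^ 2
        = (κ * Ix + μ * Id + -((r + 1) / r * Iu)) ^ 2 := by ring
    _ ≤ _ := sq_add_le_mul_add_mul (by positivity) (by positivity) (by positivity) (by positivity)
        hφpart hupart
    _ = _ := by unfold couplingConst costEnergy; ring

theorem exists_pos_mul_le_costEnergy (hQ : 0 < Q) (hr : 0 < r) (hμ : 0 < μ) (hσ : 0 < σ)
    (hκ : 0 ≤ κ) :
    ∃ m > 0, ∀ u₀ u₁ φ₀ φ₁ φ₂ : ℝ, 0 ≤ u₀ → u₀ ≤ u₁ → 0 ≤ φ₀ → φ₀ ≤ φ₁ → 0 ≤ φ₂ →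
      m * ((u₀ + u₁) + (φ₀ + φ₁ + φ₂)) ≤ costEnergy Q r μ σ κ u₀ u₁ φ₀ φ₁ φ₂ := by
  refine ⟨min (Q * μ / 2) (min (Q * r * μ / 2) (Q * μ * σ * r)), by positivity,
    fun u₀ u₁ φ₀ φ₁ φ₂ hu₀ hu hφ₀ hφ hφ₂ => ?_⟩
  set m := min (Q * μ / 2) (min (Q * r * μ / 2) (Q * μ * σ * r))
  have h1 : m ≤ Q * μ / 2 := min_le_left _ _
  have h2 : m ≤ Q * r * μ / 2 := (min_le_right _ _).trans (min_le_left _ _)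
  have h3 : m ≤ Q * μ * σ * r := (min_le_right _ _).trans (min_le_right _ _)
  have hm : 0 ≤ m := by positivity
  unfold costEnergy
  nlinarith [mul_le_mul_of_nonneg_right h1 (by linarith : 0 ≤ u₀ + u₁),
    mul_le_mul_of_nonneg_right h2 (by linarith : 0 ≤ φ₀ + φ₁),
    mul_le_mul_of_nonneg_right h3 hφ₂, mul_nonneg hm (sub_nonneg.2 hu),
    mul_nonneg hm (sub_nonneg.2 hφ), mul_nonneg (by positivity : 0 ≤ Q * κ) hu₀,
    mul_nonneg (by positivity : 0 ≤ Q * κ * r) hφ₀,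
    mul_nonneg (by positivity : 0 ≤ Q * r * σ * κ) (hφ₀.trans hφ)]

end Cost

theorem qCost_coercive_general (γ k Q r μ σ κ : ℝ)
    (hk : 0 < k) (hQ : 0 < Q) (hr : 0 < r)
    (hμ : 0 < μ) (hσ : 0 < σ) (hκ : 0 ≤ κ)
    (hden : 0 < 1 - (μ * r * k^3 * Q / (1 + σ * Real.pi^2))
      * ((1 + κ / (Real.pi * μ * Real.sqrt 3))^2
        + (r+1)^2 * (1 + σ * Real.pi^2) / (r * μ * (κ + μ * Real.pi^2))))
    (hγ : γ > gammaStar k Q r μ σ κ) :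
    ∃ A : ℝ, 0 < A ∧
      ∀ (φ φ' φ'' u u' : ℝ → ℝ) (ξ w : ℝ),
        (∀ x ∈ Icc (0:ℝ) 1, HasDerivAt φ (φ' x) x) →
        (∀ x ∈ Icc (0:ℝ) 1, HasDerivAt φ' (φ'' x) x) →
        φ' 0 = 0 → φ' 1 = 0 → (∫ x in Ioo (0:ℝ) 1, φ x) = 0 →
        (∀ x ∈ Icc (0:ℝ) 1, HasDerivAt u (u' x) x) →
        u 0 = 0 → u 1 = 0 →
        MemLp u' 2 (volume.restrict (Ioo (0:ℝ) 1)) →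
        MemLp φ'' 2 (volume.restrict (Ioo (0:ℝ) 1)) →
        qCost γ k Q r μ σ κ ξ w φ φ' φ'' u u'
          ≥ A * (ξ^2 + w^2
            + ((∫ x in Ioo (0:ℝ) 1, (u x)^2) + (∫ x in Ioo (0:ℝ) 1, (u' x)^2))
            + ((∫ x in Ioo (0:ℝ) 1, (φ x)^2) + (∫ x in Ioo (0:ℝ) 1, (φ' x)^2)
                + (∫ x in Ioo (0:ℝ) 1, (φ'' x)^2))) := by
  have hX := mul_sq_mul_couplingConst k hQ hr hμ hσ.le hκ
  rw [gt_iff_lt, gammaStar, ← hX] at hγ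
  obtain ⟨c, hc, hform⟩ := exists_pos_le_sheared_coupled_quadratic hk
    (couplingConst_nonneg hQ hr hμ hσ.le hκ) (by linarith) hγ
  obtain ⟨m, hm, henergy⟩ := exists_pos_mul_le_costEnergy hQ hr hμ hσ hκ
  refine ⟨c * min 1 m, by positivity, fun φ φ' φ'' u u' ξ w hφ hφ' hφ'0 hφ'1 hmean hu hu0 hu1
    hu' hφ'' => ?_⟩
  have hφc := HasDerivAt.continuousOn hφ
  have hφ'c := HasDerivAt.continuousOn hφ'
  have huc := HasDerivAt.continuousOn hu
  have hint : ∀ {g : ℝ → ℝ}, ContinuousOn g (Icc 0 1) → IntegrableOn g (Ioo 0 1) :=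
    fun hg => hg.integrableOn_Icc.mono_set Ioo_subset_Icc_self
  have hsq : ∀ g : ℝ → ℝ, 0 ≤ ∫ x in Ioo (0:ℝ) 1, g x ^ 2 := fun g => by positivity
  have hPu := pi_sq_mul_integral_sq_le_integral_deriv_sq hu hu0 hu1 hu'
  have hPφ' := pi_sq_mul_integral_sq_le_integral_deriv_sq hφ' hφ'0 hφ'1 hφ''
  have hPφ := integral_sq_le_integral_deriv_sq_of_integral_eq_zero hφ hφ'c.memLp_two_Ioo hmean
  have hI := sq_coupling_le_couplingConst_mul_costEnergy hQ hr hμ hσ.le hκ (hsq u) (hsq φ)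
    hPu hPφ' (sq_integral_id_mul_le_of_integral_eq_zero hφ hφ'c.memLp_two_Ioo hmean)
    (sq_integral_le_integral_sq huc.memLp_two_Ioo) (sq_integral_le_integral_sq hφ'c.memLp_two_Ioo)
  rw [← integral_coupling_eq κ ((r + 1) / r) μ (hint (continuousOn_id.mul hφc)) (hint huc)
    (hint hφ'c)] at hI
  have hE := henergy _ _ _ _ _ (hsq u)
    ((le_mul_of_one_le_left (hsq u) (by nlinarith [pi_gt_three])).trans hPu) (hsq φ) hPφ (hsq φ'')
  have hq := hform ξ w _ _ ((mul_nonneg hm.le (by positivity)).trans hE) hI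
  refine le_trans ?_ (hq.trans (le_of_eq (by unfold qCost costEnergy; ring)))
  have hmin : min 1 m * (ξ ^ 2 + w ^ 2) ≤ ξ ^ 2 + w ^ 2 :=
    mul_le_of_le_one_left (by positivity) (min_le_left _ _)
  have hmin' := (mul_le_mul_of_nonneg_right (min_le_right 1 m) (by positivity)).trans hE
  nlinarith [mul_le_mul_of_nonneg_left (add_le_add hmin hmin') hc.le]

/-- Lemma 1: coercivity of the instantaneous cost under
assumption (A) and γ > γ*. -/
theorem qCost_coercive (γ k Q r μ σ κ : ℝ)
    (hγpos : 0 < γ) (hk : 0 < k) (hQ : 0 < Q) (hr : 0 < r)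
    (hμ : 0 < μ) (hσ : 0 < σ) (hκ : 0 ≤ κ)
    (hden : 0 < 1 - (μ * r * k^3 * Q / (1 + σ * Real.pi^2))
      * ((1 + κ / (Real.pi * μ * Real.sqrt 3))^2
        + (r+1)^2 * (1 + σ * Real.pi^2) / (r * μ * (κ + μ * Real.pi^2))))
    (hγ : γ > gammaStar k Q r μ σ κ) :
    ∃ A : ℝ, 0 < A ∧
      ∀ (φ φ' φ'' u u' : ℝ → ℝ) (ξ w : ℝ),
        (∀ x ∈ Icc (0:ℝ) 1, HasDerivAt φ (φ' x) x) →
        (∀ x ∈ Icc (0:ℝ) 1, HasDerivAt φ' (φ'' x) x) →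
        φ' 0 = 0 → φ' 1 = 0 → (∫ x in Ioo (0:ℝ) 1, φ x) = 0 →
        (∀ x ∈ Icc (0:ℝ) 1, HasDerivAt u (u' x) x) →
        u 0 = 0 → u 1 = 0 →
        MemLp u' 2 (volume.restrict (Ioo (0:ℝ) 1)) →
        MemLp φ'' 2 (volume.restrict (Ioo (0:ℝ) 1)) →
        qCost γ k Q r μ σ κ ξ w φ φ' φ'' u u'
          ≥ A * (ξ^2 + w^2
            + ((∫ x in Ioo (0:ℝ) 1, (u x)^2) + (∫ x in Ioo (0:ℝ) 1, (u' x)^2))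
            + ((∫ x in Ioo (0:ℝ) 1, (φ x)^2) + (∫ x in Ioo (0:ℝ) 1, (φ' x)^2)
                + (∫ x in Ioo (0:ℝ) 1, (φ'' x)^2))) :=
  qCost_coercive_general γ k Q r μ σ κ hk hQ hr hμ hσ hκ hden hγ
end
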